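/- Let n > 2, γ ∈ (0,1), and W : ℝ₊^{n+1} → ℝ be smooth with −div(x_{n+1}^{1−2γ} ∇W) = 0 on the upper half-space. Then the function x·∇W satisfies −div(x_{n+1}^{1−2γ} ∇(x·∇W)) = 0 on ℝ₊^{n+1}. -/

import Mathlib

open Set

/-- Partial derivative in the `i`-th coordinate direction. -/
noncomputable def pd {n : ℕ} (f : EuclideanSpace ℝ (Fin n) → ℝ) (i : Fin n)
    (x : EuclideanSpace ℝ (Fin n)) : ℝ :=
  fderiv ℝ f x (EuclideanSpace.single i 1)

variable {n : ℕ}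

lemma pd_congr {f g : EuclideanSpace ℝ (Fin n) → ℝ} {x : EuclideanSpace ℝ (Fin n)}
    (h : f =ᶠ[nhds x] g) (i : Fin n) : pd f i x = pd g i x := by
  unfold pd; rw [h.fderiv_eq]

lemma pd_mul {f g : EuclideanSpace ℝ (Fin n) → ℝ} {x : EuclideanSpace ℝ (Fin n)}
    (hf : DifferentiableAt ℝ f x) (hg : DifferentiableAt ℝ g x) (i : Fin n) :
    pd (fun y => f y * g y) i x = pd f i x * g x + f x * pd g i x := by
  unfold pd
  rw [fderiv_fun_mul hf hg]
  simp only [ContinuousLinearMap.add_apply, ContinuousLinearMap.smul_apply,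
    smul_eq_mul]
  ring

lemma pd_coord (j i : Fin n) (x : EuclideanSpace ℝ (Fin n)) :
    pd (fun y => y j) i x = if i = j then 1 else 0 := by
  have : (fun y : EuclideanSpace ℝ (Fin n) => y j) = EuclideanSpace.proj j := rfl
  unfold pd
  rw [this, ContinuousLinearMap.fderiv]
  simp [EuclideanSpace.single_apply, eq_comm]

lemma pd_sum {ι : Type*} (s : Finset ι) (f : ι → EuclideanSpace ℝ (Fin n) → ℝ)
    {x : EuclideanSpace ℝ (Fin n)}
    (hf : ∀ j ∈ s, DifferentiableAt ℝ (f j) x) (i : Fin n) :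
    pd (fun y => ∑ j ∈ s, f j y) i x = ∑ j ∈ s, pd (f j) i x := by
  unfold pd
  rw [fderiv_fun_sum hf]
  simp

lemma contDiffAt_pd {f : EuclideanSpace ℝ (Fin n) → ℝ} {x : EuclideanSpace ℝ (Fin n)}
    (hf : ContDiffAt ℝ (⊤ : ℕ∞) f x) (i : Fin n) : ContDiffAt ℝ (⊤ : ℕ∞) (pd f i) x := by
  have h1 : ContDiffAt ℝ (⊤ : ℕ∞) (fderiv ℝ f) x := hf.fderiv_right (by exact (by simp))
  exact h1.clm_apply contDiffAt_const

lemma pd_comm {f : EuclideanSpace ℝ (Fin n) → ℝ} {x : EuclideanSpace ℝ (Fin n)}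
    (hf : ContDiffAt ℝ (⊤ : ℕ∞) f x) (i j : Fin n) :
    pd (pd f i) j x = pd (pd f j) i x := by
  have hsym := hf.isSymmSndFDerivAt (by rw [minSmoothness_of_isRCLikeNormedField]; exact WithTop.coe_le_coe.mpr le_top)
  have key : ∀ u v : EuclideanSpace ℝ (Fin n),
      fderiv ℝ (fun y => fderiv ℝ f y u) x v = fderiv ℝ (fderiv ℝ f) x v u := by
    intro u v
    have hd : DifferentiableAt ℝ (fderiv ℝ f) x :=
      (hf.fderiv_right (n := (⊤ : ℕ∞)) (m := (⊤ : ℕ∞)) (by exact (by simp))).differentiableAt (by simp)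
    rw [fderiv_clm_apply hd (differentiableAt_const u)]
    simp
  unfold pd
  rw [key, key, hsym]

lemma pd_add {f g : EuclideanSpace ℝ (Fin n) → ℝ} {x : EuclideanSpace ℝ (Fin n)}
    (hf : DifferentiableAt ℝ f x) (hg : DifferentiableAt ℝ g x) (i : Fin n) :
    pd (fun y => f y + g y) i x = pd f i x + pd g i x := by
  unfold pd; rw [fderiv_fun_add hf hg]; simp

lemma pd_const_mul {f : EuclideanSpace ℝ (Fin n) → ℝ} {x : EuclideanSpace ℝ (Fin n)}
    (hf : DifferentiableAt ℝ f x) (c : ℝ) (i : Fin n) :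
    pd (fun y => c * f y) i x = c * pd f i x := by
  unfold pd; rw [fderiv_const_mul hf]; simp

/-- The weighted divergence `div (x_{n+1}^{1−2γ} ∇W)`. -/
noncomputable def weightedDiv (n : ℕ) (γ : ℝ)
    (W : EuclideanSpace ℝ (Fin (n+1)) → ℝ) (x : EuclideanSpace ℝ (Fin (n+1))) : ℝ :=
  ∑ i : Fin (n+1), pd (fun y => (y (Fin.last n)) ^ (1 - 2*γ) * pd W i y) i x


lemma hasFDerivAt_wt (b : ℝ) {x : EuclideanSpace ℝ (Fin (n+1))} (hx : 0 < x (Fin.last n)) :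
    HasFDerivAt (fun y : EuclideanSpace ℝ (Fin (n+1)) => (y (Fin.last n)) ^ b)
      ((b * (x (Fin.last n)) ^ (b-1)) • (EuclideanSpace.proj (Fin.last n) :
        EuclideanSpace ℝ (Fin (n+1)) →L[ℝ] ℝ)) x := by
  have h := Real.hasDerivAt_rpow_const (x := x (Fin.last n)) (p := b) (Or.inl hx.ne')
  have hp := (EuclideanSpace.proj (Fin.last n) :
      EuclideanSpace ℝ (Fin (n+1)) →L[ℝ] ℝ).hasFDerivAt (x := x)
  exact h.comp_hasFDerivAt x hp

lemma contDiffAt_wt (b : ℝ) {x : EuclideanSpace ℝ (Fin (n+1))} (hx : 0 < x (Fin.last n)) :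
    ContDiffAt ℝ (⊤ : ℕ∞) (fun y : EuclideanSpace ℝ (Fin (n+1)) => (y (Fin.last n)) ^ b) x
 := by
  have hp : ContDiffAt ℝ (⊤ : ℕ∞) (fun y : EuclideanSpace ℝ (Fin (n+1)) => y (Fin.last n)) x :=
    (EuclideanSpace.proj (Fin.last n) :
      EuclideanSpace ℝ (Fin (n+1)) →L[ℝ] ℝ).contDiff.contDiffAt
  exact (Real.contDiffAt_rpow_const_of_ne hx.ne').comp x hp

lemma pd_wt (b : ℝ) {x : EuclideanSpace ℝ (Fin (n+1))} (hx : 0 < x (Fin.last n)) (i : Fin (n+1)) :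
    pd (fun y => (y (Fin.last n)) ^ b) i x
      = if i = Fin.last n then b * (x (Fin.last n)) ^ (b-1) else 0 := by
  unfold pd
  rw [(hasFDerivAt_wt b hx).fderiv]
  simp only [ContinuousLinearMap.coe_smul', Pi.smul_apply, PiLp.proj_apply,
    EuclideanSpace.single_apply, smul_eq_mul]
  rcases eq_or_ne i (Fin.last n) with h | h
  · simp [h]
  · simp [h, Ne.symm h]

lemma wdiv_eq {γ : ℝ} {f : EuclideanSpace ℝ (Fin (n+1)) → ℝ}
    {x : EuclideanSpace ℝ (Fin (n+1))} (hx : 0 < x (Fin.last n))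
    (hf : ∀ y, 0 < y (Fin.last n) → ContDiffAt ℝ (⊤ : ℕ∞) f y) :
    weightedDiv n γ f x =
      (1-2*γ) * (x (Fin.last n)) ^ (1-2*γ-1) * pd f (Fin.last n) x
      + (x (Fin.last n)) ^ (1-2*γ) * ∑ i, pd (pd f i) i x := by
  unfold weightedDiv
  have step : ∀ i : Fin (n+1), pd (fun y => (y (Fin.last n)) ^ (1-2*γ) * pd f i y) i x
      = (if i = Fin.last n then (1-2*γ) * (x (Fin.last n))^(1-2*γ-1) else 0) * pd f i x
        + (x (Fin.last n))^(1-2*γ) * pd (pd f i) i x := by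
    intro i
    rw [pd_mul ((contDiffAt_wt _ hx).differentiableAt (by simp))
      ((contDiffAt_pd (hf x hx) i).differentiableAt (by simp)), pd_wt _ hx]
  rw [Finset.sum_congr rfl fun i _ => step i, Finset.sum_add_distrib, ← Finset.mul_sum]
  congr 1
  simp [ite_mul, Finset.sum_ite_eq']

set_option maxHeartbeats 1000000 in
/-- If `W` is γ-harmonic on the upper half-space, so is `x · ∇W`. -/
theorem stmt_11 (n : ℕ) (hn : 2 < n) (γ : ℝ) (hγ : γ ∈ Set.Ioo (0:ℝ) 1)
    (W : EuclideanSpace ℝ (Fin (n+1)) → ℝ)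
    (hW : ContDiffOn ℝ (⊤ : ℕ∞) W {x : EuclideanSpace ℝ (Fin (n+1)) | 0 < x (Fin.last n)})
    (hharm : ∀ x : EuclideanSpace ℝ (Fin (n+1)), 0 < x (Fin.last n) →
      weightedDiv n γ W x = 0) :
    ∀ x : EuclideanSpace ℝ (Fin (n+1)), 0 < x (Fin.last n) →
      weightedDiv n γ (fun y => ∑ i : Fin (n+1), y i * pd W i y) x = 0 := by
  classical
  intro x hx
  set a : ℝ := 1 - 2*γ with ha
  -- basic topology
  have hcoord : ∀ j : Fin (n+1), ContDiff ℝ (⊤ : WithTop ℕ∞)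
      (fun y : EuclideanSpace ℝ (Fin (n+1)) => y j) := by
    intro j
    exact (EuclideanSpace.proj j : EuclideanSpace ℝ (Fin (n+1)) →L[ℝ] ℝ).contDiff
  have hUo : IsOpen {y : EuclideanSpace ℝ (Fin (n+1)) | 0 < y (Fin.last n)} :=
    isOpen_lt continuous_const (hcoord (Fin.last n)).continuous
  have hev : ∀ᶠ y in nhds x, 0 < y (Fin.last n) := hUo.mem_nhds hx
  -- smoothness
  have cW : ∀ y : EuclideanSpace ℝ (Fin (n+1)), 0 < y (Fin.last n) → ContDiffAt ℝ (⊤ : ℕ∞) W y :=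
    fun y hy => hW.contDiffAt (hUo.mem_nhds hy)
  have cP1 : ∀ (i : Fin (n+1)) y, 0 < y (Fin.last n) → ContDiffAt ℝ (⊤ : ℕ∞) (pd W i) y :=
    fun i y hy => contDiffAt_pd (cW y hy) i
  have cP2 : ∀ (i j : Fin (n+1)) y, 0 < y (Fin.last n) →
      ContDiffAt ℝ (⊤ : ℕ∞) (pd (pd W i) j) y :=
    fun i j y hy => contDiffAt_pd (cP1 i y hy) j
  have dP1 : ∀ (i : Fin (n+1)) y, 0 < y (Fin.last n) → DifferentiableAt ℝ (pd W i) y :=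
    fun i y hy => (cP1 i y hy).differentiableAt (by simp)
  have dP2 : ∀ (i j : Fin (n+1)) y, 0 < y (Fin.last n) →
      DifferentiableAt ℝ (pd (pd W i) j) y :=
    fun i j y hy => (cP2 i j y hy).differentiableAt (by simp)
  -- the function V
  set V : EuclideanSpace ℝ (Fin (n+1)) → ℝ :=
    (fun y => ∑ i : Fin (n+1), y i * pd W i y) with hV
  have cV : ∀ y, 0 < y (Fin.last n) → ContDiffAt ℝ (⊤ : ℕ∞) V y := by
    intro y hy
    exact ContDiffAt.sum fun j _ => ((hcoord j).contDiffAt.of_le le_top).mul (cP1 j y hy)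
  -- first derivatives of V on U
  have pdV : ∀ (i : Fin (n+1)) y, 0 < y (Fin.last n) →
      pd V i y = pd W i y + ∑ j, y j * pd (pd W j) i y := by
    intro i y hy
    rw [hV, pd_sum Finset.univ _ (fun j _ =>
      ((hcoord j).contDiffAt.differentiableAt (by simp)).fun_mul (dP1 j y hy)) i]
    rw [Finset.sum_congr rfl (fun j _ => pd_mul
      ((hcoord j).contDiffAt.differentiableAt (by simp)) (dP1 j y hy) i)]
    rw [Finset.sum_congr rfl (fun j _ => by rw [pd_coord j i y])]
    rw [Finset.sum_add_distrib]
    congr 1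
    simp [ite_mul, Finset.sum_ite_eq]
  -- eventual description of pd V i
  have dpdVx : ∀ i : Fin (n+1), (fun y => pd V i y) =ᶠ[nhds x]
      (fun y => pd W i y + ∑ j, y j * pd (pd W j) i y) := by
    intro i; filter_upwards [hev] with y hy; exact pdV i y hy
  have hpdVx : pd V (Fin.last n) x
      = pd W (Fin.last n) x + ∑ j, x j * pd (pd W j) (Fin.last n) x :=
    pdV (Fin.last n) x hx
  have hpd2V : ∀ i : Fin (n+1), pd (pd V i) i x
      = 2 * pd (pd W i) i x + ∑ j, x j * pd (pd (pd W j) i) i x := by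
    intro i
    rw [pd_congr (dpdVx i) i]
    rw [pd_add (dP1 i x hx) (DifferentiableAt.fun_sum fun j _ =>
      ((hcoord j).contDiffAt.differentiableAt (by simp)).fun_mul (dP2 j i x hx)) i]
    rw [pd_sum Finset.univ _ (fun j _ =>
      ((hcoord j).contDiffAt.differentiableAt (by simp)).fun_mul (dP2 j i x hx)) i]
    rw [Finset.sum_congr rfl (fun j _ => pd_mul
      ((hcoord j).contDiffAt.differentiableAt (by simp)) (dP2 j i x hx) i)]
    rw [Finset.sum_congr rfl (fun j _ => by rw [pd_coord j i x])]
    rw [Finset.sum_add_distrib]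
    simp only [ite_mul, one_mul, zero_mul, Finset.sum_ite_eq, Finset.mem_univ, if_pos]
    ring
  -- expansion of weightedDiv V
  have hwV : weightedDiv n γ V x
      = a * (x (Fin.last n)) ^ (a-1) * pd V (Fin.last n) x
        + (x (Fin.last n)) ^ a * ∑ i, pd (pd V i) i x := by
    rw [ha]; exact wdiv_eq hx cV
  -- expansion of weightedDiv W on U
  have hFexp : ∀ y, 0 < y (Fin.last n) → weightedDiv n γ W y
      = a * (y (Fin.last n)) ^ (a-1) * pd W (Fin.last n) y
        + (y (Fin.last n)) ^ a * ∑ i, pd (pd W i) i y := by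
    intro y hy; rw [ha]; exact wdiv_eq hy cW
  have hG0ev : (fun y => a * (y (Fin.last n)) ^ (a-1) * pd W (Fin.last n) y
      + (y (Fin.last n)) ^ a * ∑ i, pd (pd W i) i y) =ᶠ[nhds x] (fun _ => (0:ℝ)) := by
    filter_upwards [hev] with y hy
    rw [← hFexp y hy]; exact hharm y hy
  have E1 : a * (x (Fin.last n)) ^ (a-1) * pd W (Fin.last n) x
      + (x (Fin.last n)) ^ a * ∑ i, pd (pd W i) i x = 0 := hG0ev.eq_of_nhds
  have hpdG0 : ∀ j, pd (fun y => a * (y (Fin.last n)) ^ (a-1) * pd W (Fin.last n) y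
      + (y (Fin.last n)) ^ a * ∑ i, pd (pd W i) i y) j x = 0 := by
    intro j
    rw [pd_congr hG0ev j]
    unfold pd
    rw [fderiv_fun_const]
    simp
  -- derivative of the weight
  have dwt : ∀ b : ℝ, DifferentiableAt ℝ
      (fun y : EuclideanSpace ℝ (Fin (n+1)) => (y (Fin.last n)) ^ b) x :=
    fun b => (contDiffAt_wt b hx).differentiableAt (by simp)
  -- explicit computation of the partials of the expansion of weightedDiv W
  have hpdG : ∀ j, pd (fun y => a * (y (Fin.last n)) ^ (a-1) * pd W (Fin.last n) y
      + (y (Fin.last n)) ^ a * ∑ i, pd (pd W i) i y) j x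
      = (a * (if j = Fin.last n then (a-1) * (x (Fin.last n)) ^ (a-1-1) else 0)) * pd W (Fin.last n) x
        + a * (x (Fin.last n)) ^ (a-1) * pd (pd W (Fin.last n)) j x
        + ((if j = Fin.last n then a * (x (Fin.last n)) ^ (a-1) else 0) * (∑ i, pd (pd W i) i x)
          + (x (Fin.last n)) ^ a * (∑ i, pd (pd (pd W i) i) j x)) := by
    intro j
    rw [pd_add (((dwt (a-1)).const_mul a).fun_mul (dP1 (Fin.last n) x hx))
      ((dwt a).fun_mul (DifferentiableAt.fun_sum fun i _ => dP2 i i x hx)) j]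
    rw [pd_mul ((dwt (a-1)).const_mul a) (dP1 (Fin.last n) x hx) j]
    rw [pd_mul (dwt a) (DifferentiableAt.fun_sum fun i _ => dP2 i i x hx) j]
    rw [pd_const_mul (dwt (a-1)) a j, pd_wt (a-1) hx j, pd_wt a hx j]
    rw [pd_sum Finset.univ _ (fun i _ => dP2 i i x hx) j]
  have E2 : ∀ j, (a * (if j = Fin.last n then (a-1) * (x (Fin.last n)) ^ (a-1-1) else 0)) * pd W (Fin.last n) x
        + a * (x (Fin.last n)) ^ (a-1) * pd (pd W (Fin.last n)) j x
        + ((if j = Fin.last n then a * (x (Fin.last n)) ^ (a-1) else 0) * (∑ i, pd (pd W i) i x)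
          + (x (Fin.last n)) ^ a * (∑ i, pd (pd (pd W i) i) j x)) = 0 := by
    intro j
    rw [← hpdG j]
    exact hpdG0 j
  -- rewrite E2 without the indicator on the left
  have hE2' : ∀ j, a * (x (Fin.last n)) ^ (a-1) * pd (pd W (Fin.last n)) j x + (x (Fin.last n)) ^ a * (∑ i, pd (pd (pd W i) i) j x)
      = (if j = Fin.last n then -((a * ((a-1) * (x (Fin.last n)) ^ (a-1-1)) * pd W (Fin.last n) x + a * (x (Fin.last n)) ^ (a-1) * (∑ i, pd (pd W i) i x))) else 0) := by
    intro j
    have h := E2 j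
    split_ifs with hj
    · rw [if_pos hj] at h
      rw [if_pos hj] at h
      linarith
    · rw [if_neg hj] at h
      rw [if_neg hj] at h
      linarith
  -- sum the relation hE2' against x j
  have hQR : a * (x (Fin.last n)) ^ (a-1) * (∑ j, x j * pd (pd W (Fin.last n)) j x) + (x (Fin.last n)) ^ a * (∑ j, x j * (∑ i, pd (pd (pd W i) i) j x))
      = -(x (Fin.last n) * (a * ((a-1) * (x (Fin.last n)) ^ (a-1-1)) * pd W (Fin.last n) x + a * (x (Fin.last n)) ^ (a-1) * (∑ i, pd (pd W i) i x))) := by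
    rw [Finset.mul_sum, Finset.mul_sum, ← Finset.sum_add_distrib]
    have step1 : ∑ j, (a * (x (Fin.last n)) ^ (a-1) * (x j * pd (pd W (Fin.last n)) j x) + (x (Fin.last n)) ^ a * (x j * (∑ i, pd (pd (pd W i) i) j x)))
        = ∑ j, x j * (a * (x (Fin.last n)) ^ (a-1) * pd (pd W (Fin.last n)) j x + (x (Fin.last n)) ^ a * (∑ i, pd (pd (pd W i) i) j x)) :=
      Finset.sum_congr rfl fun j _ => by ring
    rw [step1]
    have step2 : ∑ j, x j * (a * (x (Fin.last n)) ^ (a-1) * pd (pd W (Fin.last n)) j x + (x (Fin.last n)) ^ a * (∑ i, pd (pd (pd W i) i) j x))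
        = ∑ j, x j * (if j = Fin.last n then -(a * ((a-1) * (x (Fin.last n)) ^ (a-1-1)) * pd W (Fin.last n) x + a * (x (Fin.last n)) ^ (a-1) * (∑ i, pd (pd W i) i x)) else 0) :=
      Finset.sum_congr rfl fun j _ => by rw [hE2' j]
    rw [step2]
    simp only [mul_ite, mul_zero, Finset.sum_ite_eq', Finset.mem_univ, if_true]
    ring
  -- symmetry of second and third derivatives
  have sym2 : ∀ j, pd (pd W j) (Fin.last n) x = pd (pd W (Fin.last n)) j x :=
    fun j => pd_comm (cW x hx) j (Fin.last n)
  have sym3 : ∀ i j : Fin (n+1), pd (pd (pd W j) i) i x = pd (pd (pd W i) i) j x := by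
    intro i j
    have e1 : (fun y => pd (pd W j) i y) =ᶠ[nhds x] (fun y => pd (pd W i) j y) := by
      filter_upwards [hev] with y hy
      exact pd_comm (cW y hy) j i
    rw [pd_congr e1 i]
    exact pd_comm (cP1 i x hx) j i
  -- power relations
  have hτ0 : (x (Fin.last n)) ^ a = (x (Fin.last n)) ^ (a-1) * x (Fin.last n) := by
    have h := Real.rpow_add_one (x := x (Fin.last n)) hx.ne' (a-1)
    rw [show a-1+1 = a by ring] at h
    exact h
  have hτ1 : (x (Fin.last n)) ^ (a-1) = (x (Fin.last n)) ^ (a-1-1) * x (Fin.last n) := by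
    have h := Real.rpow_add_one (x := x (Fin.last n)) hx.ne' (a-1-1)
    rw [show a-1-1+1 = a-1 by ring] at h
    exact h
  -- final assembly
  rw [hwV, hpdVx]
  rw [Finset.sum_congr rfl fun i _ => hpd2V i]
  have hsym2sum : (∑ j, x j * pd (pd W j) (Fin.last n) x)
      = ∑ j, x j * pd (pd W (Fin.last n)) j x :=
    Finset.sum_congr rfl fun j _ => by rw [sym2 j]
  rw [hsym2sum]
  have hswap : (∑ i, (2 * pd (pd W i) i x + ∑ j, x j * pd (pd (pd W j) i) i x))
      = 2 * (∑ i, pd (pd W i) i x) + ∑ j, x j * (∑ i, pd (pd (pd W i) i) j x) := by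
    rw [Finset.sum_add_distrib, ← Finset.mul_sum]
    congr 1
    have e1 : ∀ i : Fin (n+1), (∑ j, x j * pd (pd (pd W j) i) i x)
        = ∑ j, x j * pd (pd (pd W i) i) j x :=
      fun i => Finset.sum_congr rfl fun j _ => by rw [sym3 i j]
    rw [Finset.sum_congr rfl fun i _ => e1 i, Finset.sum_comm]
    exact Finset.sum_congr rfl fun j _ => (Finset.mul_sum _ _ _).symm
  rw [hswap]
  rw [hτ0, hτ1] at E1 hQR ⊢
  linear_combination hQR + (2-a) * E1
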